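/- Let f be a C¹ diffeomorphism of a closed surface M and p₀, q₀ ∈ M. Writing p_s = f^s(p₀) and q_s = f^s(q₀), for every n ≥ 0 one has [μ_{f^{n+1}}(p₀), μ_{f^{n+1}}(q₀)] ≤ Σ_{s=0}^{n} [ T_{μ_f(p_s)}(θ_f(p_s) μ_{f^{n-s}}(q_{s+1})), T_{μ_f(q_s)}(θ_f(q_s) μ_{f^{n-s}}(q_{s+1})) ], where T_a(z) = (a+z)/(1+ā z) and θ_f(p) = (conj(f_z)/f_z)(p). -/

import Mathlib

/- Statement 6: Let f be a C¹ diffeomorphism of a closed surface M and p₀, q₀ ∈ M. Writing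
p_s = f^s(p₀) and q_s = f^s(q₀), for every n ≥ 0 one has
[μ_{f^{n+1}}(p₀), μ_{f^{n+1}}(q₀)] ≤
  Σ_{s=0}^{n} [ T_{μ_f(p_s)}(θ_f(p_s) μ_{f^{n-s}}(q_{s+1})),
                T_{μ_f(q_s)}(θ_f(q_s) μ_{f^{n-s}}(q_{s+1})) ],
where T_a(z) = (a+z)/(1+ā z) and θ_f(p) = (conj(f_z)/f_z)(p).

The complex dilatation data μ (with `μ n` the complex dilatation of `f^n`) and θ, defined
via the conformal structure induced from the universal cover, are recorded through their
characterizing properties: they take values in the unit disc (resp. circle), `μ 0 = 0`,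
and they satisfy the composition rule μ_{f^{n+1}}(p) = T_{μ_f(p)}(θ_f(p) μ_{f^n}(f(p))). -/

open Metric Set Filter Topology Complex
open scoped Manifold

noncomputable section

/-- The Möbius transformation `T_a(z) = (a + z) / (1 + ā z)` of the unit disc. -/
noncomputable def Tmob (a z : ℂ) : ℂ := (a + z) / (1 + (starRingEnd ℂ) a * z)

/-- The hyperbolic (Poincaré) distance on the unit disc. -/
noncomputable def hypDist (a b : ℂ) : ℝ :=
  Real.log ((1 + ‖(a - b) / (1 - (starRingEnd ℂ) a * b)‖) /
    (1 - ‖(a - b) / (1 - (starRingEnd ℂ) a * b)‖))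

/-! Put `Φ_x(z) = T_{μ_f(x)}(θ_f(x) z)`. The composition rule reads
`μ_{f^{n+1}}(x) = Φ_x(μ_{f^n}(f x))`, and each `Φ_x`, a rotation followed by a Möbius map, is a
hyperbolic isometry of the disc. By induction on `n`, going through the intermediate point
`Φ_p(μ_{f^n}(f q))` costs the `s = 0` term, and isometry of `Φ_p` turns the remaining distance into
the same problem for `f p, f q`.
The hyperbolic triangle inequality is moved by a Möbius map to the case where the middle point is
`0`, where it is `ρ(x, y) ≤ (|x| + |y|) / (1 + |x||y|)` for the pseudo-hyperbolic distance `ρ`. -/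

open ComplexConjugate

lemma normSq_one_sub_conj_mul_sub_normSq_sub (a b : ℂ) :
    normSq (1 - conj a * b) - normSq (a - b) = (1 - normSq a) * (1 - normSq b) := by
  simp only [normSq_apply, sub_re, sub_im, mul_re, mul_im, conj_re, conj_im, one_re, one_im]
  ring

lemma norm_sub_lt_norm_one_sub_conj_mul {a b : ℂ} (ha : ‖a‖ < 1) (hb : ‖b‖ < 1) :
    ‖a - b‖ < ‖1 - conj a * b‖ := by
  have ha' : normSq a < 1 := by rw [← Complex.sq_norm]; nlinarith [norm_nonneg a]
  have hb' : normSq b < 1 := by rw [← Complex.sq_norm]; nlinarith [norm_nonneg b]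
  have h := normSq_one_sub_conj_mul_sub_normSq_sub a b
  have : ‖a - b‖ ^ 2 < ‖1 - conj a * b‖ ^ 2 := by
    rw [Complex.sq_norm, Complex.sq_norm]; nlinarith
  exact lt_of_pow_lt_pow_left₀ 2 (norm_nonneg _) this

lemma one_sub_conj_mul_ne_zero {a b : ℂ} (ha : ‖a‖ < 1) (hb : ‖b‖ < 1) :
    1 - conj a * b ≠ 0 :=
  norm_pos_iff.mp ((norm_nonneg _).trans_lt (norm_sub_lt_norm_one_sub_conj_mul ha hb))

lemma one_add_conj_mul_ne_zero {a z : ℂ} (ha : ‖a‖ < 1) (hz : ‖z‖ < 1) :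
    1 + conj a * z ≠ 0 := by
  simpa using one_sub_conj_mul_ne_zero ha (b := -z) (by simpa using hz)

lemma norm_Tmob_lt_one {a z : ℂ} (ha : ‖a‖ < 1) (hz : ‖z‖ < 1) : ‖Tmob a z‖ < 1 := by
  have h := norm_sub_lt_norm_one_sub_conj_mul ha (b := -z) (by simpa using hz)
  simp only [sub_neg_eq_add, mul_neg] at h
  rw [Tmob, norm_div, div_lt_one ((norm_nonneg _).trans_lt h)]
  exact h

lemma Tmob_neg_self (b : ℂ) : Tmob (-b) b = 0 := by
  simp [Tmob]

def pseudoHypDist (a b : ℂ) : ℝ := ‖(a - b) / (1 - conj a * b)‖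

lemma hypDist_eq (a b : ℂ) :
    hypDist a b = Real.log ((1 + pseudoHypDist a b) / (1 - pseudoHypDist a b)) := rfl

lemma Tmob_sub_div_one_sub_conj_mul {a z w : ℂ} (ha : ‖a‖ < 1) (hz : ‖z‖ < 1) (hw : ‖w‖ < 1) :
    (Tmob a z - Tmob a w) / (1 - conj (Tmob a z) * Tmob a w) =
      (z - w) / (1 - conj z * w) * ((1 + a * conj z) / (1 + conj a * z)) := by
  have hDz := one_add_conj_mul_ne_zero ha hz
  have hDw := one_add_conj_mul_ne_zero ha hw
  have hDz' : 1 + a * conj z ≠ 0 := by simpa using (map_ne_zero (starRingEnd ℂ)).mpr hDz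
  have haa := one_sub_conj_mul_ne_zero ha ha
  have hzw := one_sub_conj_mul_ne_zero hz hw
  have hconj : conj (Tmob a z) = (conj a + conj z) / (1 + a * conj z) := by simp [Tmob]
  rw [hconj]
  simp only [Tmob]
  generalize conj a = a' at *
  generalize conj z = z' at *
  have hden : 1 - (a' + z') / (1 + a * z') * ((a + w) / (1 + a' * w)) =
      (1 - a' * a) * (1 - z' * w) / ((1 + a * z') * (1 + a' * w)) := by
    rw [div_mul_div_comm, one_sub_div (mul_ne_zero hDz' hDw)]
    ring
  rw [hden, div_sub_div _ _ hDz hDw, div_div_div_eq, div_mul_div_comm,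
    div_eq_div_iff (mul_ne_zero (mul_ne_zero hDz hDw) (mul_ne_zero haa hzw)) (mul_ne_zero hzw hDz)]
  ring

lemma pseudoHypDist_Tmob {a z w : ℂ} (ha : ‖a‖ < 1) (hz : ‖z‖ < 1) (hw : ‖w‖ < 1) :
    pseudoHypDist (Tmob a z) (Tmob a w) = pseudoHypDist z w := by
  have hD : 1 + a * conj z = conj (1 + conj a * z) := by simp
  rw [pseudoHypDist, Tmob_sub_div_one_sub_conj_mul ha hz hw, norm_mul, norm_div (1 + _), hD,
    norm_conj, div_self (norm_ne_zero_iff.mpr (one_add_conj_mul_ne_zero ha hz)), mul_one,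
    pseudoHypDist]

lemma pseudoHypDist_mul_left {u : ℂ} (hu : ‖u‖ = 1) (z w : ℂ) :
    pseudoHypDist (u * z) (u * w) = pseudoHypDist z w := by
  have hconj : conj u * u = 1 := by
    rw [mul_comm, mul_conj, normSq_eq_norm_sq, hu]; norm_num
  have hden : 1 - conj (u * z) * (u * w) = 1 - conj z * w := by
    rw [map_mul, mul_mul_mul_comm, hconj, one_mul]
  rw [pseudoHypDist, pseudoHypDist, hden, ← mul_sub, mul_div_assoc, norm_mul, hu, one_mul]

lemma hypDist_Tmob {a z w : ℂ} (ha : ‖a‖ < 1) (hz : ‖z‖ < 1) (hw : ‖w‖ < 1) :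
    hypDist (Tmob a z) (Tmob a w) = hypDist z w := by
  rw [hypDist_eq, hypDist_eq, pseudoHypDist_Tmob ha hz hw]

lemma hypDist_mul_left {u : ℂ} (hu : ‖u‖ = 1) (z w : ℂ) :
    hypDist (u * z) (u * w) = hypDist z w := by
  rw [hypDist_eq, hypDist_eq, pseudoHypDist_mul_left hu]

lemma pseudoHypDist_le {x y : ℂ} (hx : ‖x‖ < 1) (hy : ‖y‖ < 1) :
    pseudoHypDist x y ≤ (‖x‖ + ‖y‖) / (1 + ‖x‖ * ‖y‖) := by
  have hx' : ‖x‖ ^ 2 ≤ 1 := by nlinarith [norm_nonneg x]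
  have hy' : ‖y‖ ^ 2 ≤ 1 := by nlinarith [norm_nonneg y]
  have hK : 0 ≤ (1 - ‖x‖ ^ 2) * (1 - ‖y‖ ^ 2) := mul_nonneg (by linarith) (by linarith)
  have hid := normSq_one_sub_conj_mul_sub_normSq_sub x y
  rw [← Complex.sq_norm, ← Complex.sq_norm, ← Complex.sq_norm, ← Complex.sq_norm] at hid
  -- by `hid`, `(1 + |x||y|)² - (|x| + |y|)² = |1 - x̄ y|² - |x - y|²`, so this reduces to
  -- the Euclidean triangle inequality
  have htri : ‖x - y‖ ^ 2 ≤ (‖x‖ + ‖y‖) ^ 2 :=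
    pow_le_pow_left₀ (norm_nonneg _) (norm_sub_le x y) 2
  have hsq : (‖x - y‖ * (1 + ‖x‖ * ‖y‖)) ^ 2 ≤ ((‖x‖ + ‖y‖) * ‖1 - conj x * y‖) ^ 2 := by
    rw [mul_pow, mul_pow]
    nlinarith [mul_le_mul_of_nonneg_right htri hK]
  have hle := le_of_pow_le_pow_left₀ two_ne_zero
    (mul_nonneg (by positivity) (norm_nonneg _)) hsq
  have hden : 0 < ‖1 - conj x * y‖ := norm_pos_iff.mpr (one_sub_conj_mul_ne_zero hx hy)
  rw [pseudoHypDist, norm_div, div_le_div_iff₀ hden (by positivity)]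
  linarith

lemma log_one_add_div_one_sub_le_add {ρ r s : ℝ} (hρ : 0 ≤ ρ) (hr : 0 ≤ r) (hs : 0 ≤ s)
    (hr1 : r < 1) (hs1 : s < 1) (hρrs : ρ ≤ (r + s) / (1 + r * s)) :
    Real.log ((1 + ρ) / (1 - ρ)) ≤
      Real.log ((1 + r) / (1 - r)) + Real.log ((1 + s) / (1 - s)) := by
  have hrs : 0 < 1 + r * s := by positivity
  rw [le_div_iff₀ hrs] at hρrs
  have hρ1 : ρ < 1 := by nlinarith [mul_pos (sub_pos.2 hr1) (sub_pos.2 hs1)]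
  rw [← Real.log_mul (by positivity) (by positivity)]
  gcongr
  rw [div_mul_div_comm, div_le_div_iff₀ (by linarith) (by nlinarith)]
  nlinarith [mul_nonneg hr hs, mul_nonneg hρ (mul_nonneg hr hs)]

lemma pseudoHypDist_zero_right (x : ℂ) : pseudoHypDist x 0 = ‖x‖ := by
  simp [pseudoHypDist]

lemma pseudoHypDist_zero_left (y : ℂ) : pseudoHypDist 0 y = ‖y‖ := by
  simp [pseudoHypDist]

lemma hypDist_le_hypDist_zero_add {x y : ℂ} (hx : ‖x‖ < 1) (hy : ‖y‖ < 1) :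
    hypDist x y ≤ hypDist x 0 + hypDist 0 y := by
  rw [hypDist_eq, hypDist_eq, hypDist_eq, pseudoHypDist_zero_right, pseudoHypDist_zero_left]
  exact log_one_add_div_one_sub_le_add (norm_nonneg _) (norm_nonneg _) (norm_nonneg _) hx hy
    (pseudoHypDist_le hx hy)

lemma hypDist_triangle {a b c : ℂ} (ha : ‖a‖ < 1) (hb : ‖b‖ < 1) (hc : ‖c‖ < 1) :
    hypDist a c ≤ hypDist a b + hypDist b c := by
  have hb' : ‖-b‖ < 1 := by rwa [norm_neg]
  have := hypDist_le_hypDist_zero_add (norm_Tmob_lt_one hb' ha) (norm_Tmob_lt_one hb' hc)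
  rwa [← Tmob_neg_self b, hypDist_Tmob hb' ha hc, hypDist_Tmob hb' ha hb,
    hypDist_Tmob hb' hb hc] at this

theorem hypDist_le_sum_of_succ_eq {X : Type*} {g : X → X} {Φ : X → ℂ → ℂ} {m : ℕ → X → ℂ}
    (hm : ∀ k x, ‖m k x‖ < 1) (hm₀ : ∀ x y, m 0 x = m 0 y)
    (hΦ : ∀ x z, ‖z‖ < 1 → ‖Φ x z‖ < 1)
    (hΦ_iso : ∀ x z w, ‖z‖ < 1 → ‖w‖ < 1 → hypDist (Φ x z) (Φ x w) = hypDist z w)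
    (hm_succ : ∀ k x, m (k + 1) x = Φ x (m k (g x))) (n : ℕ) (p q : X) :
    hypDist (m (n + 1) p) (m (n + 1) q) ≤
      ∑ s ∈ Finset.range (n + 1),
        hypDist (Φ (g^[s] p) (m (n - s) (g^[s + 1] q))) (Φ (g^[s] q) (m (n - s) (g^[s + 1] q))) := by
  induction n generalizing p q with
  | zero => simp [hm_succ, hm₀ (g p) (g q)]
  | succ n ih =>
    rw [Finset.sum_range_succ', hm_succ _ p, hm_succ _ q]
    calc hypDist (Φ p (m (n + 1) (g p))) (Φ q (m (n + 1) (g q)))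
        ≤ hypDist (Φ p (m (n + 1) (g p))) (Φ p (m (n + 1) (g q))) +
            hypDist (Φ p (m (n + 1) (g q))) (Φ q (m (n + 1) (g q))) :=
          hypDist_triangle (hΦ _ _ (hm _ _)) (hΦ _ _ (hm _ _)) (hΦ _ _ (hm _ _))
      _ ≤ _ := by
          rw [hΦ_iso _ _ _ (hm _ _) (hm _ _)]
          refine add_le_add ?_ le_rfl
          simpa only [Function.iterate_succ_apply, Nat.add_sub_add_right] using ih (g p) (g q)

theorem hypDist_mu_iterates_le_general
    {M : Type*} [MetricSpace M]
    (f : M ≃ₜ M)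
    -- μ n is the complex dilatation of fⁿ, θ is θ_f
    (μ : ℕ → M → ℂ) (hμ : ∀ n p, ‖μ n p‖ < 1) (hμ0 : ∀ p, μ 0 p = 0)
    (θ : M → ℂ) (hθ : ∀ p, ‖θ p‖ = 1)
    (hcomp : ∀ n p, μ (n + 1) p = Tmob (μ 1 p) (θ p * μ n (f p)))
    (p₀ q₀ : M) (n : ℕ) :
    hypDist (μ (n + 1) p₀) (μ (n + 1) q₀) ≤
      ∑ s ∈ Finset.range (n + 1),
        hypDist
          (Tmob (μ 1 ((⇑f)^[s] p₀)) (θ ((⇑f)^[s] p₀) * μ (n - s) ((⇑f)^[s + 1] q₀)))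
          (Tmob (μ 1 ((⇑f)^[s] q₀)) (θ ((⇑f)^[s] q₀) * μ (n - s) ((⇑f)^[s + 1] q₀))) := by
  have hrot : ∀ p {z : ℂ}, ‖z‖ < 1 → ‖θ p * z‖ < 1 := fun p z hz => by
    rwa [norm_mul, hθ, one_mul]
  refine hypDist_le_sum_of_succ_eq (Φ := fun p z => Tmob (μ 1 p) (θ p * z)) hμ
    (fun p q => by rw [hμ0, hμ0]) (fun p z hz => norm_Tmob_lt_one (hμ 1 p) (hrot p hz))
    (fun p z w hz hw => ?_) hcomp n p₀ q₀
  rw [hypDist_Tmob (hμ 1 p) (hrot p hz) (hrot p hw), hypDist_mul_left (hθ p)]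

theorem hypDist_mu_iterates_le
    {M : Type*} [MetricSpace M] [CompactSpace M] [ConnectedSpace M]
    [ChartedSpace (EuclideanSpace ℝ (Fin 2)) M] [IsManifold (𝓡 2) (⊤ : ℕ∞) M]
    (f : M ≃ₜ M)
    (hf : ContMDiff (𝓡 2) (𝓡 2) 1 ⇑f) (hf' : ContMDiff (𝓡 2) (𝓡 2) 1 ⇑f.symm)
    -- μ n is the complex dilatation of fⁿ, θ is θ_f
    (μ : ℕ → M → ℂ) (hμ : ∀ n p, ‖μ n p‖ < 1) (hμ0 : ∀ p, μ 0 p = 0)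
    (θ : M → ℂ) (hθ : ∀ p, ‖θ p‖ = 1)
    (hcomp : ∀ n p, μ (n + 1) p = Tmob (μ 1 p) (θ p * μ n (f p)))
    (p₀ q₀ : M) (n : ℕ) :
    hypDist (μ (n + 1) p₀) (μ (n + 1) q₀) ≤
      ∑ s ∈ Finset.range (n + 1),
        hypDist
          (Tmob (μ 1 ((⇑f)^[s] p₀)) (θ ((⇑f)^[s] p₀) * μ (n - s) ((⇑f)^[s + 1] q₀)))
          (Tmob (μ 1 ((⇑f)^[s] q₀)) (θ ((⇑f)^[s] q₀) * μ (n - s) ((⇑f)^[s + 1] q₀))) :=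
  hypDist_mu_iterates_le_general f μ hμ hμ0 θ hθ hcomp p₀ q₀ n
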